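/- arXiv:2110.13052 — 5 statements merged into one kernel-verified Lean document; each statement's English description precedes it below -/
import Mathlib

section
/- For every integer n ≥ 1, the learning-rate weights satisfy 1/√n ≤ Σ_{i=1}^n α_n^i/√i ≤ 2/√n. -/
open scoped BigOperators

noncomputable section

/-- The per-step learning rate `α_t = (H+1)/(H+t)`. -/
def alphaT (H t : ℕ) : ℝ := (H + 1) / (H + t)

/-- The aggregated learning-rate weights `α_n^i`:
`α_0^0 = 1`, `α_n^0 = 0` for `n ≥ 1`, and `α_n^i = α_i ∏_{j=i+1}^n (1 - α_j)` for `1 ≤ i ≤ n`. -/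
def alphaW (H n i : ℕ) : ℝ :=
  if i = 0 then (if n = 0 then 1 else 0)
  else alphaT H i * ∏ j ∈ Finset.Icc (i + 1) n, (1 - alphaT H j)

/-!
The weights obey `α_{n+1}^i = (1 - α_{n+1}) α_n^i` for `i ≤ n` and `α_{n+1}^{n+1} = α_{n+1}`, so
`S_n = ∑ α_n^i f(i)` is the moving average `S_{n+1} = (1 - α_{n+1}) S_n + α_{n+1} f(n+1)`.
With `f = 1` the weights sum to one, and as `1/√i ≥ 1/√n` this gives the lower bound. For the upper
bound, `2/√n` is a supersolution of the recursion with `f(i) = 1/√i`: after clearing denominators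
this is `H + 1 + 2√n√(n+1) ≤ 2(H + n + 1)`, which is AM-GM.
-/

open Finset Real

lemma alphaT_nonneg (H t : ℕ) : 0 ≤ alphaT H t := by
  unfold alphaT
  positivity

lemma alphaT_le_one (H t : ℕ) (ht : 1 ≤ t) : alphaT H t ≤ 1 := by
  have : (1 : ℝ) ≤ t := by exact_mod_cast ht
  unfold alphaT
  rw [div_le_one (by positivity)]
  linarith

lemma alphaT_one (H : ℕ) : alphaT H 1 = 1 := by
  unfold alphaT
  push_cast
  exact div_self (by positivity)

lemma one_sub_alphaT_succ (H n : ℕ) : 1 - alphaT H (n + 1) = n / (H + n + 1) := by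
  unfold alphaT
  push_cast
  field_simp
  ring

lemma alphaW_nonneg (H n i : ℕ) (hi : 1 ≤ i) : 0 ≤ alphaW H n i := by
  rw [alphaW, if_neg (by omega)]
  refine mul_nonneg (alphaT_nonneg H i) (prod_nonneg fun j hj => ?_)
  linarith [alphaT_le_one H j (by linarith [(mem_Icc.mp hj).1])]

lemma alphaW_self (H n : ℕ) (hn : 1 ≤ n) : alphaW H n n = alphaT H n := by
  rw [alphaW, if_neg (by omega), Icc_eq_empty (by omega), prod_empty, mul_one]

lemma alphaW_succ (H n i : ℕ) (hi : 1 ≤ i) (hin : i ≤ n) :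
    alphaW H (n + 1) i = (1 - alphaT H (n + 1)) * alphaW H n i := by
  rw [alphaW, alphaW, if_neg (by omega), if_neg (by omega),
    prod_Icc_succ_top (by omega : i + 1 ≤ n + 1)]
  ring

lemma sum_alphaW_mul_succ (H n : ℕ) (f : ℕ → ℝ) :
    ∑ i ∈ Icc 1 (n + 1), alphaW H (n + 1) i * f i =
      (1 - alphaT H (n + 1)) * ∑ i ∈ Icc 1 n, alphaW H n i * f i +
        alphaT H (n + 1) * f (n + 1) := by
  rw [sum_Icc_succ_top (by omega), alphaW_self H (n + 1) (by omega), mul_sum]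
  congr 1
  refine sum_congr rfl fun i hi => ?_
  rw [alphaW_succ H n i (mem_Icc.mp hi).1 (mem_Icc.mp hi).2, mul_assoc]

lemma sum_alphaW (H n : ℕ) (hn : 1 ≤ n) : ∑ i ∈ Icc 1 n, alphaW H n i = 1 := by
  induction n, hn using Nat.le_induction with
  | base => simpa [alphaT_one] using sum_alphaW_mul_succ H 0 1
  | succ n _ ih => simpa [ih] using sum_alphaW_mul_succ H n 1

lemma one_sub_alphaT_mul_add_le (H n : ℕ) :
    (1 - alphaT H (n + 1)) * (2 / √n) + alphaT H (n + 1) * (√(n + 1))⁻¹ ≤ 2 / √(n + 1) := by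
  have hs2 : √(n : ℝ) ^ 2 = n := sq_sqrt (by positivity)
  have ht2 : √((n : ℝ) + 1) ^ 2 = n + 1 := sq_sqrt (by positivity)
  have amgm := two_mul_le_add_sq √(n : ℝ) √((n : ℝ) + 1)
  have ht : 0 < √((n : ℝ) + 1) := sqrt_pos.mpr (by positivity)
  have hD : (0 : ℝ) < H + n + 1 := by positivity
  rw [one_sub_alphaT_succ, alphaT, Nat.cast_succ, ← add_assoc]
  calc _ = (H + 1 + 2 * √(n : ℝ) * √((n : ℝ) + 1)) / ((H + n + 1) * √((n : ℝ) + 1)) := by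
        rw [div_mul_div_comm, mul_comm (n : ℝ), mul_comm (H + n + 1 : ℝ), ← div_div,
          mul_div_assoc, div_sqrt]
        field_simp
        ring
    _ ≤ 2 * (H + n + 1) / ((H + n + 1) * √((n : ℝ) + 1)) := by
        gcongr
        linarith [(by positivity : (0 : ℝ) ≤ H)]
    _ = 2 / √((n : ℝ) + 1) := by field_simp

lemma sum_alphaW_div_sqrt_le (H n : ℕ) : ∑ i ∈ Icc 1 n, alphaW H n i / √i ≤ 2 / √n := by
  simp_rw [div_eq_mul_inv (alphaW H _ _)]
  induction n with
  | zero => simp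
  | succ n ih =>
    have h1 : 0 ≤ 1 - alphaT H (n + 1) := by linarith [alphaT_le_one H (n + 1) (by omega)]
    rw [sum_alphaW_mul_succ]
    push_cast
    calc _ ≤ (1 - alphaT H (n + 1)) * (2 / √n) + alphaT H (n + 1) * (√(n + 1))⁻¹ := by gcongr
      _ ≤ 2 / √(n + 1) := one_sub_alphaT_mul_add_le H n

lemma div_sqrt_le_sum_alphaW_div_sqrt (H n : ℕ) (hn : 1 ≤ n) :
    1 / √n ≤ ∑ i ∈ Icc 1 n, alphaW H n i / √i :=
  calc 1 / √n = ∑ i ∈ Icc 1 n, alphaW H n i / √n := by rw [← sum_div, sum_alphaW H n hn]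
    _ ≤ ∑ i ∈ Icc 1 n, alphaW H n i / √i := by
      refine sum_le_sum fun i hi => ?_
      obtain ⟨hi1, hin⟩ := mem_Icc.mp hi
      exact div_le_div_of_nonneg_left (alphaW_nonneg H n i hi1)
        (sqrt_pos.mpr (by exact_mod_cast hi1)) (sqrt_le_sqrt (by exact_mod_cast hin))

theorem alphaW_div_sqrt_sum_bounds_general (H : ℕ) (n : ℕ) (hn : 1 ≤ n) :
    1 / Real.sqrt n ≤ ∑ i ∈ Finset.Icc 1 n, alphaW H n i / Real.sqrt i ∧
    ∑ i ∈ Finset.Icc 1 n, alphaW H n i / Real.sqrt i ≤ 2 / Real.sqrt n :=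
  ⟨div_sqrt_le_sum_alphaW_div_sqrt H n hn, sum_alphaW_div_sqrt_le H n⟩

/-- For every `n ≥ 1`, `1/√n ≤ ∑_{i=1}^n α_n^i/√i ≤ 2/√n`. -/
theorem alphaW_div_sqrt_sum_bounds (H : ℕ) (hH : 1 ≤ H) (n : ℕ) (hn : 1 ≤ n) :
    1 / Real.sqrt n ≤ ∑ i ∈ Finset.Icc 1 n, alphaW H n i / Real.sqrt i ∧
    ∑ i ∈ Finset.Icc 1 n, alphaW H n i / Real.sqrt i ≤ 2 / Real.sqrt n :=
  alphaW_div_sqrt_sum_bounds_general H n hn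
end
end

section
/- Let c > 0 be a real number, let W and I be finite sets with M = |W|, let f : W → I, let θ : I → (0, ∞), and let n : W → ℕ_{≥1} be such that n is injective on each fiber f⁻¹({i}), i ∈ I. Then Σ_{w ∈ W} clip[ c/√(n(w)) | θ(f(w)) ] ≤ min{ 2c·√(|I|·M), Σ_{i ∈ I} 4c²/θ(i) }. -/
open scoped BigOperators

noncomputable section

lemma sum_Icc_one_div_sqrt_le (N : ℕ) :
    ∑ k ∈ Finset.Icc 1 N, (1 : ℝ) / Real.sqrt k ≤ 2 * Real.sqrt N := by
  induction N with
  | zero => simp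
  | succ N ih =>
    have hins : Finset.Icc 1 (N+1) = insert (N+1) (Finset.Icc 1 N) := by
      ext k; simp [Finset.mem_Icc, Finset.mem_insert]; omega
    rw [hins, Finset.sum_insert (by simp)]
    have hb : (0:ℝ) < Real.sqrt (N+1) := Real.sqrt_pos.2 (by positivity)
    have ha : (0:ℝ) ≤ Real.sqrt N := Real.sqrt_nonneg _
    have ha2 : Real.sqrt N ^ 2 = N := Real.sq_sqrt (by positivity)
    have hb2 : Real.sqrt (N+1) ^ 2 = N+1 := Real.sq_sqrt (by positivity)
    have key : (1:ℝ) / Real.sqrt (N+1) ≤ 2 * Real.sqrt (N+1) - 2 * Real.sqrt N := by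
      rw [div_le_iff₀ hb]
      nlinarith [sq_nonneg (Real.sqrt (N+1) - Real.sqrt N)]
    push_cast
    linarith

lemma fin_le_orderEmb {m : ℕ} (S : Finset ℕ) (hcard : S.card = m)
    (h1 : ∀ k ∈ S, 1 ≤ k) : ∀ j (h : j < m), j + 1 ≤ S.orderEmbOfFin hcard ⟨j, h⟩ := by
  intro j
  induction j with
  | zero => intro h; exact h1 _ (S.orderEmbOfFin_mem hcard ⟨0, h⟩)
  | succ j ih =>
    intro h
    have hj : j < m := by omega
    have := ih hj
    have hlt : S.orderEmbOfFin hcard ⟨j, hj⟩ < S.orderEmbOfFin hcard ⟨j+1, h⟩ := by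
      apply (S.orderEmbOfFin hcard).strictMono
      simp [Fin.lt_def]
    omega

/-- Sum of 1/√k over a finset of positive naturals is at most the same sum over {1,…,card}. -/
lemma sum_one_div_sqrt_le_card (S : Finset ℕ) (h1 : ∀ k ∈ S, 1 ≤ k) :
    ∑ k ∈ S, (1 : ℝ) / Real.sqrt k ≤ 2 * Real.sqrt S.card := by
  have hcard : S.card = S.card := rfl
  calc ∑ k ∈ S, (1 : ℝ) / Real.sqrt k
      = ∑ i : Fin S.card, (1:ℝ) / Real.sqrt (S.orderEmbOfFin hcard i) := by
        refine (Finset.sum_bij (fun (i : Fin S.card) _ => S.orderEmbOfFin hcard i)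
          ?_ ?_ ?_ ?_).symm
        · intro i _; exact S.orderEmbOfFin_mem hcard i
        · intro a _ b _ h; exact (S.orderEmbOfFin hcard).injective h
        · intro k hk
          have : k ∈ Set.range (S.orderEmbOfFin hcard) := by
            rw [S.range_orderEmbOfFin hcard]; exact hk
          obtain ⟨i, hi⟩ := this
          exact ⟨i, Finset.mem_univ i, hi⟩
        · intro i _; rfl
    _ ≤ ∑ i : Fin S.card, (1:ℝ) / Real.sqrt (i+1) := by
        apply Finset.sum_le_sum
        intro i _
        apply div_le_div_of_nonneg_left one_pos.le
        · exact Real.sqrt_pos.2 (by positivity)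
        · apply Real.sqrt_le_sqrt
          exact_mod_cast fin_le_orderEmb S hcard h1 i.1 i.2
    _ = ∑ k ∈ Finset.Icc 1 S.card, (1:ℝ) / Real.sqrt k := by
        rw [Fin.sum_univ_eq_sum_range (fun k => (1:ℝ)/Real.sqrt (k+1)), ← Finset.Ico_add_one_right_eq_Icc,
          Finset.sum_Ico_eq_sum_range]
        apply Finset.sum_congr rfl
        intro k _
        push_cast
        ring_nf
    _ ≤ 2 * Real.sqrt S.card := sum_Icc_one_div_sqrt_le _

lemma sum_one_div_sqrt_le_of_le (S : Finset ℕ) (h1 : ∀ k ∈ S, 1 ≤ k) (N : ℕ)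
    (hN : ∀ k ∈ S, k ≤ N) :
    ∑ k ∈ S, (1 : ℝ) / Real.sqrt k ≤ 2 * Real.sqrt N := by
  have hsub : S ⊆ Finset.Icc 1 N := fun k hk => Finset.mem_Icc.2 ⟨h1 k hk, hN k hk⟩
  refine le_trans (Finset.sum_le_sum_of_subset_of_nonneg hsub ?_) (sum_Icc_one_div_sqrt_le N)
  intro k _ _
  positivity


/-- `clip[x | y] = x` if `x ≥ y` and `0` otherwise. -/
def clip (x y : ℝ) : ℝ := if y ≤ x then x else 0

/-- Let `W`, `I` be finite sets with `M = |W|`, `f : W → I`, `θ : I → (0,∞)`, and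
`n : W → ℕ_{≥1}` injective on each fiber of `f`.  Then
`∑_{w ∈ W} clip[c/√(n w) | θ(f w)] ≤ min{2c√(|I|·M), ∑_{i ∈ I} 4c²/θ i}`. -/
theorem clip_sum_le_min {W I : Type*} [Fintype W] [Fintype I]
    (c : ℝ) (hc : 0 < c) (f : W → I) (θ : I → ℝ) (hθ : ∀ i, 0 < θ i)
    (n : W → ℕ) (hn : ∀ w, 1 ≤ n w)
    (hinj : ∀ i : I, Set.InjOn n {w | f w = i}) :
    ∑ w : W, clip (c / Real.sqrt (n w)) (θ (f w)) ≤
      min (2 * c * Real.sqrt ((Fintype.card I : ℝ) * (Fintype.card W : ℝ)))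
          (∑ i : I, 4 * c ^ 2 / θ i) := by
  classical
  set F : I → Finset W := fun i => Finset.univ.filter (fun w => f w = i) with hF
  set A : I → Finset W := fun i => (F i).filter (fun w => θ i ≤ c / Real.sqrt (n w)) with hA
  set S : I → Finset ℕ := fun i => (A i).image n with hS
  -- split the sum over fibers
  have hsplit : ∑ w : W, clip (c / Real.sqrt (n w)) (θ (f w)) =
      ∑ i : I, ∑ w ∈ F i, clip (c / Real.sqrt (n w)) (θ (f w)) :=
    (Finset.sum_fiberwise_of_maps_to (fun w _ => Finset.mem_univ (f w)) _).symm
  -- rewrite each fiber sum through the image under n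
  have hfiber : ∀ i, ∑ w ∈ F i, clip (c / Real.sqrt (n w)) (θ (f w)) =
      c * ∑ k ∈ S i, (1 : ℝ) / Real.sqrt k := by
    intro i
    have h1 : ∑ w ∈ F i, clip (c / Real.sqrt (n w)) (θ (f w)) =
        ∑ w ∈ F i, (if θ i ≤ c / Real.sqrt (n w) then c / Real.sqrt (n w) else 0) := by
      refine Finset.sum_congr rfl fun w hw => ?_
      have : f w = i := (Finset.mem_filter.1 hw).2
      rw [clip, this]
    rw [h1, ← Finset.sum_filter]
    have hAi : (F i).filter (fun w => θ i ≤ c / Real.sqrt (n w)) = A i := rfl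
    rw [hAi]
    have hinj' : ∀ a ∈ A i, ∀ b ∈ A i, n a = n b → a = b := by
      intro a ha b hb h
      exact hinj i (Finset.mem_filter.1 (Finset.mem_filter.1 ha).1).2
        (Finset.mem_filter.1 (Finset.mem_filter.1 hb).1).2 h
    have hSi : S i = (A i).image n := rfl
    rw [hSi, Finset.mul_sum, Finset.sum_image hinj']
    exact Finset.sum_congr rfl fun w _ => by rw [mul_one_div]
  have hSpos : ∀ i, ∀ k ∈ S i, 1 ≤ k := by
    intro i k hk
    obtain ⟨w, _, rfl⟩ := Finset.mem_image.1 hk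
    exact hn w
  -- first bound: 2c√(|I|·M)
  have hbound1 : ∑ i : I, c * ∑ k ∈ S i, (1 : ℝ) / Real.sqrt k ≤
      2 * c * Real.sqrt ((Fintype.card I : ℝ) * (Fintype.card W : ℝ)) := by
    have step1 : ∀ i, c * ∑ k ∈ S i, (1 : ℝ) / Real.sqrt k ≤
        2 * c * Real.sqrt ((F i).card) := by
      intro i
      have hcard : ((S i).card : ℝ) ≤ ((F i).card : ℝ) := by
        exact_mod_cast le_trans Finset.card_image_le (Finset.card_filter_le _ _)
      calc c * ∑ k ∈ S i, (1 : ℝ) / Real.sqrt k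
          ≤ c * (2 * Real.sqrt ((S i).card)) :=
            mul_le_mul_of_nonneg_left (sum_one_div_sqrt_le_card _ (hSpos i)) hc.le
        _ ≤ 2 * c * Real.sqrt ((F i).card) := by
            rw [show c * (2 * Real.sqrt ((S i).card)) = 2 * c * Real.sqrt ((S i).card) by ring]
            exact mul_le_mul_of_nonneg_left (Real.sqrt_le_sqrt hcard) (by positivity)
    calc ∑ i : I, c * ∑ k ∈ S i, (1 : ℝ) / Real.sqrt k
        ≤ ∑ i : I, 2 * c * Real.sqrt ((F i).card) := Finset.sum_le_sum fun i _ => step1 i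
      _ = 2 * c * ∑ i : I, Real.sqrt ((F i).card) := by rw [Finset.mul_sum]
      _ ≤ 2 * c * Real.sqrt ((Fintype.card I : ℝ) * (Fintype.card W : ℝ)) := by
          refine mul_le_mul_of_nonneg_left ?_ (by positivity)
          have hcs : (∑ i : I, Real.sqrt ((F i).card)) ^ 2 ≤
              (Fintype.card I : ℝ) * ∑ i : I, ((F i).card : ℝ) := by
            have h := sq_sum_le_card_mul_sum_sq
              (s := (Finset.univ : Finset I)) (f := fun i => Real.sqrt ((F i).card))
            simp only [Finset.card_univ] at h
            have heq : ∑ i : I, Real.sqrt ((F i).card) ^ 2 = ∑ i : I, ((F i).card : ℝ) :=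
              Finset.sum_congr rfl fun i _ => Real.sq_sqrt (Nat.cast_nonneg _)
            rw [heq] at h
            exact h
          have hsum : ∑ i : I, ((F i).card : ℝ) = (Fintype.card W : ℝ) := by
            rw [← Nat.cast_sum]
            norm_cast
            exact (Finset.card_eq_sum_card_fiberwise (fun w _ => Finset.mem_univ (f w))).symm
          rw [hsum] at hcs
          calc ∑ i : I, Real.sqrt ((F i).card)
              = Real.sqrt ((∑ i : I, Real.sqrt ((F i).card)) ^ 2) := by
                rw [Real.sqrt_sq (Finset.sum_nonneg fun i _ => Real.sqrt_nonneg _)]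
            _ ≤ Real.sqrt ((Fintype.card I : ℝ) * (Fintype.card W : ℝ)) :=
                Real.sqrt_le_sqrt hcs
  -- second bound: ∑ 4c²/θ i
  have hbound2 : ∑ i : I, c * ∑ k ∈ S i, (1 : ℝ) / Real.sqrt k ≤ ∑ i : I, 4 * c ^ 2 / θ i := by
    refine Finset.sum_le_sum fun i _ => ?_
    have hθi := hθ i
    have hle : ∀ k ∈ S i, k ≤ ⌊(c / θ i) ^ 2⌋₊ := by
      intro k hk
      obtain ⟨w, hw, rfl⟩ := Finset.mem_image.1 hk
      have hθle : θ i ≤ c / Real.sqrt (n w) := (Finset.mem_filter.1 hw).2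
      have hs : (0:ℝ) < Real.sqrt (n w) := Real.sqrt_pos.2 (by exact_mod_cast hn w)
      have h2 : Real.sqrt (n w) ≤ c / θ i := by
        rw [le_div_iff₀ hθi]
        calc Real.sqrt (n w) * θ i ≤ Real.sqrt (n w) * (c / Real.sqrt (n w)) :=
              mul_le_mul_of_nonneg_left hθle hs.le
          _ = c := by field_simp
      have h3 : ((n w : ℝ)) ≤ (c / θ i) ^ 2 := by
        have := Real.sq_sqrt (le_of_lt (show (0:ℝ) < (n w : ℝ) by exact_mod_cast hn w))
        nlinarith [Real.sqrt_nonneg ((n w : ℝ))]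
      exact Nat.le_floor h3
    have hsqle : Real.sqrt (⌊(c / θ i) ^ 2⌋₊ : ℝ) ≤ c / θ i := by
      have h5 : Real.sqrt (⌊(c / θ i) ^ 2⌋₊ : ℝ) ≤ Real.sqrt ((c / θ i) ^ 2) :=
        Real.sqrt_le_sqrt (Nat.floor_le (by positivity))
      rwa [Real.sqrt_sq (by positivity)] at h5
    calc c * ∑ k ∈ S i, (1 : ℝ) / Real.sqrt k
        ≤ c * (2 * Real.sqrt (⌊(c / θ i) ^ 2⌋₊ : ℝ)) :=
          mul_le_mul_of_nonneg_left (sum_one_div_sqrt_le_of_le _ (hSpos i) _ hle) hc.le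
      _ ≤ c * (2 * (c / θ i)) := by
          refine mul_le_mul_of_nonneg_left (by linarith [hsqle]) hc.le
      _ ≤ 4 * c ^ 2 / θ i := by
          have h4 : c * (2 * (c / θ i)) = 2 * c ^ 2 / θ i := by field_simp
          rw [h4, div_le_div_iff₀ hθi hθi]
          nlinarith
  rw [hsplit]
  have := Finset.sum_congr rfl fun i (_ : i ∈ Finset.univ) => hfiber i
  rw [this]
  exact le_min hbound1 hbound2
end
end

section
/- Let 𝒮 and 𝒜 be finite sets of sizes S and A with A ≥ 2, let H ≥ 1 be an integer, and let Δ : 𝒮×𝒜×[H] → [0,H] be any function taking at least one positive value. Define Δ_min = min{Δ_h(x,a) : Δ_h(x,a) > 0}, A_{h,0}^opt(x) = {a ∈ 𝒜 : Δ_h(x,a) = 0}, and A_mul = {(x,a,h) : Δ_h(x,a) = 0 and |A_{h,0}^opt(x)| > 1}. Then Σ_{(x,a,h) : Δ_h(x,a) > 0} 1/Δ_h(x,a) + |A_mul|/Δ_min ≥ SA/2. -/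
/-!
At each step `h` and state `x`, every action either has a positive gap, or a zero gap; if several
actions have a zero gap they all lie in `A_mul`, so at most one action per `(x, h)` is counted by
neither term. Both `Δ_h(x,a)` and `Δ_min` are at most `H`, so each counted triple contributes at
least `1/H`, and the left-hand side is at least `S (A - 1) ≥ SA/2`.
-/

open Finset
open scoped Classical

noncomputable section

section GapCounting

variable {σ α : Type*} [Fintype σ] [Fintype α] (Δ : ℕ → σ → α → ℝ) (H : ℕ)

def stateActionSteps (σ α : Type*) [Fintype σ] [Fintype α] (H : ℕ) : Finset (σ × α × ℕ) :=
  univ ×ˢ univ ×ˢ Icc 1 H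

def zeroGapActions (h : ℕ) (x : σ) : Finset α :=
  univ.filter fun a => Δ h x a = 0

def positiveGapTriples : Finset (σ × α × ℕ) :=
  (stateActionSteps σ α H).filter fun t => 0 < Δ t.2.2 t.1 t.2.1

def multipleOptTriples : Finset (σ × α × ℕ) :=
  (stateActionSteps σ α H).filter fun t =>
    Δ t.2.2 t.1 t.2.1 = 0 ∧ 1 < #(zeroGapActions Δ t.2.2 t.1)

def uniqueOptTriples : Finset (σ × α × ℕ) :=
  (stateActionSteps σ α H).filter fun t =>
    Δ t.2.2 t.1 t.2.1 = 0 ∧ #(zeroGapActions Δ t.2.2 t.1) ≤ 1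

def positiveGapValues : Set ℝ :=
  {g : ℝ | 0 < g ∧ ∃ x a, ∃ h ∈ Icc 1 H, Δ h x a = g}

def minPositiveGap : ℝ :=
  sInf (positiveGapValues Δ H)

theorem card_stateActionSteps :
    #(stateActionSteps σ α H) = Fintype.card σ * Fintype.card α * H := by
  simp [stateActionSteps, mul_assoc]

theorem stateActionSteps_subset (hΔ : ∀ h x a, 0 ≤ Δ h x a) :
    stateActionSteps σ α H ⊆
      positiveGapTriples Δ H ∪ multipleOptTriples Δ H ∪ uniqueOptTriples Δ H := by
  intro t ht
  simp only [positiveGapTriples, multipleOptTriples, uniqueOptTriples, mem_union, mem_filter]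
  rcases (hΔ t.2.2 t.1 t.2.1).lt_or_eq with hpos | hzero
  · exact .inl (.inl ⟨ht, hpos⟩)
  · rcases lt_or_ge 1 #(zeroGapActions Δ t.2.2 t.1) with hmul | huniq
    · exact .inl (.inr ⟨ht, hzero.symm, hmul⟩)
    · exact .inr ⟨ht, hzero.symm, huniq⟩

theorem card_uniqueOptTriples_le : #(uniqueOptTriples Δ H) ≤ Fintype.card σ * H := by
  have hinj : Set.InjOn (fun t : σ × α × ℕ => (t.1, t.2.2)) (uniqueOptTriples Δ H) := by
    rintro ⟨x, a, h⟩ ht ⟨x', a', h'⟩ ht' heq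
    simp only [Prod.mk.injEq] at heq
    obtain ⟨rfl, rfl⟩ := heq
    simp only [uniqueOptTriples, coe_filter, Set.mem_ofPred_eq] at ht ht'
    have hunique := card_le_one.mp ht.2.2
    simp only [zeroGapActions, mem_filter, mem_univ, true_and] at hunique
    rw [hunique a ht.2.1 a' ht'.2.1]
  calc #(uniqueOptTriples Δ H)
      ≤ #((univ : Finset σ) ×ˢ Icc 1 H) := by
        refine card_le_card_of_injOn _ (fun t ht => ?_) hinj
        simp only [uniqueOptTriples, stateActionSteps, coe_filter, Set.mem_ofPred_eq,
          mem_product] at ht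
        simpa using ht.1.2.2
    _ = Fintype.card σ * H := by simp

theorem card_stateActionSteps_le (hΔ : ∀ h x a, 0 ≤ Δ h x a) :
    Fintype.card σ * Fintype.card α * H ≤
      #(positiveGapTriples Δ H) + #(multipleOptTriples Δ H) + Fintype.card σ * H := by
  calc Fintype.card σ * Fintype.card α * H = #(stateActionSteps σ α H) :=
        (card_stateActionSteps H).symm
    _ ≤ #(positiveGapTriples Δ H ∪ multipleOptTriples Δ H ∪ uniqueOptTriples Δ H) :=
        card_le_card (stateActionSteps_subset Δ H hΔ)
    _ ≤ _ := (card_union_le _ _).trans (add_le_add (card_union_le _ _)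
        (card_uniqueOptTriples_le Δ H))

theorem minPositiveGap_mem (hpos : ∃ x a, ∃ h ∈ Icc 1 H, 0 < Δ h x a) :
    minPositiveGap Δ H ∈ positiveGapValues Δ H := by
  have hfinite : (positiveGapValues Δ H).Finite := by
    refine (Set.finite_range fun t : Icc 1 H × σ × α => Δ t.1 t.2.1 t.2.2).subset ?_
    rintro g ⟨-, x, a, h, hh, rfl⟩
    exact ⟨⟨⟨h, hh⟩, x, a⟩, rfl⟩
  obtain ⟨x, a, h, hh, hg⟩ := hpos
  exact Set.Nonempty.csInf_mem ⟨Δ h x a, hg, x, a, h, hh, rfl⟩ hfinite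

end GapCounting

theorem card_div_le_sum_one_div {ι : Type*} (s : Finset ι) (f : ι → ℝ) {M : ℝ}
    (hpos : ∀ i ∈ s, 0 < f i) (hle : ∀ i ∈ s, f i ≤ M) :
    #s / M ≤ ∑ i ∈ s, 1 / f i := by
  simpa [div_eq_mul_one_div (#s : ℝ)] using
    card_nsmul_le_sum s (fun i => 1 / f i) (1 / M)
      fun i hi => one_div_le_one_div_of_le (hpos i hi) (hle i hi)

theorem gap_sum_plus_mul_ge_general (S A H : ℕ) (hA : 2 ≤ A)
    (Δ : ℕ → Fin S → Fin A → ℝ)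
    (hΔ : ∀ h x a, Δ h x a ∈ Set.Icc (0 : ℝ) H)
    (hpos : ∃ x a, ∃ h ∈ Finset.Icc 1 H, 0 < Δ h x a) :
    let T3 : Finset (Fin S × Fin A × ℕ) :=
      Finset.univ ×ˢ Finset.univ ×ˢ Finset.Icc 1 H
    let Δmin : ℝ := sInf {g : ℝ | 0 < g ∧ ∃ x a, ∃ h ∈ Finset.Icc 1 H, Δ h x a = g}
    let Aopt : ℕ → Fin S → Finset (Fin A) :=
      fun h x => Finset.univ.filter fun a => Δ h x a = 0
    let Amul : Finset (Fin S × Fin A × ℕ) :=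
      T3.filter fun t => Δ t.2.2 t.1 t.2.1 = 0 ∧ 1 < (Aopt t.2.2 t.1).card
    (S : ℝ) * A / 2 ≤
      (∑ t ∈ T3.filter (fun t => 0 < Δ t.2.2 t.1 t.2.1), 1 / Δ t.2.2 t.1 t.2.1)
        + (Amul.card : ℝ) / Δmin := by
  show (S : ℝ) * A / 2 ≤ (∑ t ∈ positiveGapTriples Δ H, 1 / Δ t.2.2 t.1 t.2.1)
    + #(multipleOptTriples Δ H) / minPositiveGap Δ H
  obtain ⟨hmin_pos, x, a, h, -, hmin_eq⟩ := minPositiveGap_mem Δ H hpos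
  have hmin_le : minPositiveGap Δ H ≤ H := hmin_eq ▸ (hΔ h x a).2
  have hH : (0 : ℝ) < H := hmin_pos.trans_le hmin_le
  have hcount : (S : ℝ) * A * H ≤
      #(positiveGapTriples Δ H) + #(multipleOptTriples Δ H) + S * H := by
    exact_mod_cast (by simpa using card_stateActionSteps_le Δ H fun h x a => (hΔ h x a).1)
  have hpos_sum : (#(positiveGapTriples Δ H) : ℝ) / H ≤
      ∑ t ∈ positiveGapTriples Δ H, 1 / Δ t.2.2 t.1 t.2.1 :=
    card_div_le_sum_one_div _ _ (fun t ht => (mem_filter.mp ht).2) fun t _ => (hΔ _ _ _).2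
  have hmul : (#(multipleOptTriples Δ H) : ℝ) / H ≤
      #(multipleOptTriples Δ H) / minPositiveGap Δ H := by
    gcongr
  have hA' : (2 : ℝ) ≤ A := by exact_mod_cast hA
  calc (S : ℝ) * A / 2
      ≤ #(positiveGapTriples Δ H) / H + #(multipleOptTriples Δ H) / H := by
        rw [← add_div, le_div_iff₀ hH]
        nlinarith [mul_nonneg (mul_nonneg (Nat.cast_nonneg S) hH.le) (sub_nonneg.mpr hA')]
    _ ≤ _ := add_le_add hpos_sum hmul

/-- Let `𝒮 = Fin S` and `𝒜 = Fin A` with `A ≥ 2`, `H ≥ 1`, and let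
`Δ : [H] × 𝒮 × 𝒜 → [0,H]` take at least one positive value.  With
`Δ_min = min{Δ_h(x,a) : Δ_h(x,a) > 0}`, `A_{h,0}^opt(x) = {a : Δ_h(x,a) = 0}` and
`A_mul = {(x,a,h) : Δ_h(x,a) = 0 ∧ |A_{h,0}^opt(x)| > 1}`, we have
`∑_{(x,a,h) : Δ_h(x,a) > 0} 1/Δ_h(x,a) + |A_mul|/Δ_min ≥ SA/2`. -/
theorem gap_sum_plus_mul_ge (S A H : ℕ) (hA : 2 ≤ A) (hH : 1 ≤ H)
    (Δ : ℕ → Fin S → Fin A → ℝ)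
    (hΔ : ∀ h x a, Δ h x a ∈ Set.Icc (0 : ℝ) H)
    (hpos : ∃ x a, ∃ h ∈ Finset.Icc 1 H, 0 < Δ h x a) :
    let T3 : Finset (Fin S × Fin A × ℕ) :=
      Finset.univ ×ˢ Finset.univ ×ˢ Finset.Icc 1 H
    let Δmin : ℝ := sInf {g : ℝ | 0 < g ∧ ∃ x a, ∃ h ∈ Finset.Icc 1 H, Δ h x a = g}
    let Aopt : ℕ → Fin S → Finset (Fin A) :=
      fun h x => Finset.univ.filter fun a => Δ h x a = 0
    let Amul : Finset (Fin S × Fin A × ℕ) :=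
      T3.filter fun t => Δ t.2.2 t.1 t.2.1 = 0 ∧ 1 < (Aopt t.2.2 t.1).card
    (S : ℝ) * A / 2 ≤
      (∑ t ∈ T3.filter (fun t => 0 < Δ t.2.2 t.1 t.2.1), 1 / Δ t.2.2 t.1 t.2.1)
        + (Amul.card : ℝ) / Δmin :=
  gap_sum_plus_mul_ge_general S A H hA Δ hΔ hpos
end
end

section
/- Suppose the event E₀ holds. If a suboptimal action a ≠ a* is pulled by BanditAlg at a step t ≤ λT, then N^t(a) ≤ 8·log(1/δ)/Δ(a)². -/
open scoped BigOperators Classical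

noncomputable section

/-- One realization of a run of `BanditAlg` on a stochastic multi-armed bandit instance with
`A` arms and `T` steps.  `Qstar a` is the (unknown) mean reward of arm `a`, `astar` the unique
optimal arm, `Qtilde` the input predictions, `lam ∈ (A/T, 1)` and `δ ∈ (0,1)` the input
parameters, `acts t` the arm pulled at step `t` (steps are `t = 1, …, T`), and `rew t ∈ [0,1]`
the reward observed at step `t`. -/
structure BanditExec (A T : ℕ) where
  Qstar : Fin A → ℝ
  astar : Fin A
  Qtilde : Fin A → ℝ
  lam : ℝ
  δ : ℝ
  acts : ℕ → Fin A
  rew : ℕ → ℝ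
  hQrange : ∀ a, Qstar a ∈ Set.Icc (0 : ℝ) 1
  hQtrange : ∀ a, Qtilde a ∈ Set.Icc (0 : ℝ) 1
  hopt : ∀ a, a ≠ astar → Qstar a < Qstar astar
  hlam_lb : (A : ℝ) / T < lam
  hlam_ub : lam < 1
  hδ_pos : 0 < δ
  hδ_lt : δ < 1
  hrew : ∀ t, rew t ∈ Set.Icc (0 : ℝ) 1

namespace BanditExec

variable {A T : ℕ}

/-- The gap `Δ(a) = Q^*(a^*) − Q^*(a)`. -/
def Δ (E : BanditExec A T) (a : Fin A) : ℝ := E.Qstar E.astar - E.Qstar a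

/-- `N^t(a)`: the number of pulls of arm `a` before step `t`. -/
def N (E : BanditExec A T) (t : ℕ) (a : Fin A) : ℕ :=
  ((Finset.Ico 1 t).filter fun s => E.acts s = a).card

/-- `μ̂^t(a)`: the empirical mean reward of arm `a` before step `t` (`0` if never pulled). -/
def muhat (E : BanditExec A T) (t : ℕ) (a : Fin A) : ℝ :=
  if N E t a = 0 then 0
  else (∑ s ∈ (Finset.Ico 1 t).filter (fun s => E.acts s = a), E.rew s) / (N E t a)

/-- The confidence radius `√(2 log(1/δ) / N^t(a))`. -/
def conf (E : BanditExec A T) (t : ℕ) (a : Fin A) : ℝ :=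
  Real.sqrt (2 * Real.log (1 / E.δ) / (N E t a))

/-- `Q̄^t(a) = μ̂^t(a) + √(2 log(1/δ)/N^t(a))`, with `Q̄^t(a) = +∞` when `N^t(a) = 0`. -/
def Qbar (E : BanditExec A T) (t : ℕ) (a : Fin A) : EReal :=
  if N E t a = 0 then ⊤ else ((muhat E t a + conf E t a : ℝ) : EReal)

/-- `Q̲^t(a) = μ̂^t(a) − √(2 log(1/δ)/N^t(a))`, with `Q̲^t(a) = −∞` when `N^t(a) = 0`. -/
def Qlow (E : BanditExec A T) (t : ℕ) (a : Fin A) : EReal :=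
  if N E t a = 0 then ⊥ else ((muhat E t a - conf E t a : ℝ) : EReal)

/-- `Q̃^t(a) = max{Q̲^t(a), min{Q̄^t(a), Q̃(a)}}`. -/
def Qtil (E : BanditExec A T) (t : ℕ) (a : Fin A) : EReal :=
  max (E.Qlow t a) (min (E.Qbar t a) ((E.Qtilde a : ℝ) : EReal))

/-- The defining property of `BanditAlg`: at each step `t ≤ λT` it pulls an arm
maximizing `Q̄^t`, and at each step `t > λT` it pulls an arm maximizing `Q̃^t`. -/
def Valid (E : BanditExec A T) : Prop :=
  (∀ t : ℕ, 1 ≤ t → (t : ℝ) ≤ E.lam * T → ∀ a, E.Qbar t a ≤ E.Qbar t (E.acts t)) ∧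
  (∀ t : ℕ, 1 ≤ t → t ≤ T → E.lam * T < (t : ℝ) → ∀ a, E.Qtil t a ≤ E.Qtil t (E.acts t))

/-- The event `E₀`: all empirical means are within their confidence radii of the true means. -/
def E0 (E : BanditExec A T) : Prop :=
  ∀ t ∈ Finset.Icc 1 T, ∀ a, 0 < N E t a →
    |E.Qstar a - muhat E t a| ≤ conf E t a

end BanditExec

open BanditExec

/-- Under the event `E₀`, if a suboptimal arm `a ≠ a^*` is pulled by `BanditAlg` at a step
`t ≤ λT`, then `N^t(a) ≤ 8 log(1/δ)/Δ(a)²`. -/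
theorem pulls_bound_early_phase {A T : ℕ} (E : BanditExec A T) (hE : E.Valid) (h0 : E.E0) :
    ∀ t : ℕ, 1 ≤ t → t ≤ T → (t : ℝ) ≤ E.lam * T →
      E.acts t ≠ E.astar →
      (N E t (E.acts t) : ℝ) ≤ 8 * Real.log (1 / E.δ) / (E.Δ (E.acts t)) ^ 2 := by
  intro t ht1 htT htlam hne
  set a := E.acts t with ha
  have hL : 0 < Real.log (1 / E.δ) := by
    apply Real.log_pos
    rw [lt_div_iff₀ E.hδ_pos]; simpa using E.hδ_lt
  have hΔpos : 0 < E.Δ a := sub_pos.mpr (E.hopt a hne)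
  have hΔsq : 0 < (E.Δ a) ^ 2 := pow_pos hΔpos 2
  by_cases hN : N E t a = 0
  · rw [hN]
    push_cast
    positivity
  · have hNpos : 0 < N E t a := Nat.pos_of_ne_zero hN
    have htIcc : t ∈ Finset.Icc 1 T := Finset.mem_Icc.mpr ⟨ht1, htT⟩
    -- E0 bound for arm a
    have hEa : |E.Qstar a - muhat E t a| ≤ conf E t a := h0 t htIcc a hNpos
    -- Qbar of astar ≥ Qstar astar
    have hstar : ((E.Qstar E.astar : ℝ) : EReal) ≤ E.Qbar t E.astar := by
      unfold BanditExec.Qbar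
      split_ifs with h
      · exact le_top
      · have hE' : |E.Qstar E.astar - muhat E t E.astar| ≤ conf E t E.astar :=
          h0 t htIcc E.astar (Nat.pos_of_ne_zero h)
        have := abs_le.mp hE'
        exact_mod_cast (by linarith [this.1] : E.Qstar E.astar ≤ muhat E t E.astar + conf E t E.astar)
    have halg : E.Qbar t E.astar ≤ E.Qbar t a := hE.1 t ht1 htlam E.astar
    have hQbar : E.Qbar t a = ((muhat E t a + conf E t a : ℝ) : EReal) := by
      unfold BanditExec.Qbar; rw [if_neg hN]
    have hkey : E.Qstar E.astar ≤ muhat E t a + conf E t a := by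
      have := hstar.trans halg
      rw [hQbar] at this
      exact_mod_cast this
    have habs := abs_le.mp hEa
    have hgap : E.Δ a ≤ 2 * conf E t a := by
      unfold BanditExec.Δ; linarith [habs.2]
    -- conf^2 = 2L/N
    have hNR : (0 : ℝ) < (N E t a : ℝ) := by exact_mod_cast hNpos
    have hconf_sq : (conf E t a) ^ 2 = 2 * Real.log (1 / E.δ) / (N E t a) := by
      unfold BanditExec.conf
      rw [Real.sq_sqrt]
      positivity
    have hconf_nonneg : 0 ≤ conf E t a := Real.sqrt_nonneg _
    have hΔsq_le : (E.Δ a) ^ 2 ≤ 4 * (2 * Real.log (1 / E.δ) / (N E t a)) := by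
      calc (E.Δ a) ^ 2 ≤ (2 * conf E t a) ^ 2 := by
            apply pow_le_pow_left₀ (le_of_lt hΔpos) hgap
        _ = 4 * (conf E t a) ^ 2 := by ring
        _ = 4 * (2 * Real.log (1 / E.δ) / (N E t a)) := by rw [hconf_sq]
    rw [show 4 * (2 * Real.log (1 / E.δ) / (N E t a : ℝ)) = 8 * Real.log (1 / E.δ) / (N E t a : ℝ) by ring] at hΔsq_le
    rw [le_div_iff₀ hNR] at hΔsq_le
    rw [le_div_iff₀ hΔsq]
    nlinarith
end
end

section
/- Suppose the event E₀ holds and the predictions Q̃ are an ε-approximate distillation of Q* (i.e., for some a ∈ 𝒜, Δ(a) + max{Q*(a) − Q̃(a), 0} ≤ ε). If a suboptimal action a ≠ a* with Δ(a) > ε is pulled by BanditAlg at a step t > λT, then Q̃(a) ≥ Q*(a*) − ε, and moreover N^t(a) ≤ 8·log(1/δ)/(Δ(a) − ε)². -/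
open scoped BigOperators Classical

noncomputable section

open BanditExec

/-- Under the event `E₀`, if the predictions `Q̃` are an ε-approximate distillation of `Q^*`
and a suboptimal arm `a ≠ a^*` with `Δ(a) > ε` is pulled by `BanditAlg` at a step `t > λT`,
then `Q̃(a) ≥ Q^*(a^*) − ε` and `N^t(a) ≤ 8 log(1/δ)/(Δ(a) − ε)²`. -/
theorem pulls_bound_late_phase {A T : ℕ} (E : BanditExec A T) (hE : E.Valid) (h0 : E.E0)
    (ε : ℝ) (hdistill : ∃ a, E.Δ a + max (E.Qstar a - E.Qtilde a) 0 ≤ ε) :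
    ∀ t : ℕ, 1 ≤ t → t ≤ T → E.lam * T < (t : ℝ) →
      E.acts t ≠ E.astar → ε < E.Δ (E.acts t) →
      E.Qstar E.astar - ε ≤ E.Qtilde (E.acts t) ∧
      (N E t (E.acts t) : ℝ) ≤ 8 * Real.log (1 / E.δ) / (E.Δ (E.acts t) - ε) ^ 2 := by
  intro t ht1 htT hlt hbne hgap
  obtain ⟨a0, ha0⟩ := hdistill
  set b := E.acts t with hbdef
  have hL : 0 < Real.log (1 / E.δ) := by
    apply Real.log_pos
    rw [lt_div_iff₀ E.hδ_pos]
    linarith [E.hδ_lt]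
  have hmax1 : E.Qstar a0 - E.Qtilde a0 ≤ max (E.Qstar a0 - E.Qtilde a0) 0 := le_max_left _ _
  have hmax0 : (0:ℝ) ≤ max (E.Qstar a0 - E.Qtilde a0) 0 := le_max_right _ _
  have hΔa0 : E.Qstar E.astar - E.Qstar a0 ≤ ε := by
    have := ha0; unfold BanditExec.Δ at this; linarith
  have hQt0 : E.Qstar E.astar - ε ≤ E.Qtilde a0 := by
    have := ha0; unfold BanditExec.Δ at this; linarith
  set c : ℝ := E.Qstar E.astar - ε with hcdef
  have h0t := h0 t (Finset.mem_Icc.mpr ⟨ht1, htT⟩)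
  -- Step 1: c ≤ Qtil t a0
  have hA : ((c : ℝ) : EReal) ≤ E.Qtil t a0 := by
    rcases Nat.eq_zero_or_pos (N E t a0) with h | h
    · have hbar : E.Qbar t a0 = ⊤ := by simp [BanditExec.Qbar, h]
      have hge : ((c:ℝ):EReal) ≤ min (E.Qbar t a0) ((E.Qtilde a0 : ℝ):EReal) := by
        rw [hbar, min_eq_right le_top]
        exact_mod_cast hQt0
      exact le_trans hge (le_max_right _ _)
    · have habs := abs_le.mp (h0t a0 h)
      have h1 : c ≤ E.muhat t a0 + E.conf t a0 := by linarith [habs.1, habs.2]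
      have hbar : E.Qbar t a0 = ((E.muhat t a0 + E.conf t a0 : ℝ):EReal) := by
        simp [BanditExec.Qbar, h.ne']
      have hge : ((c:ℝ):EReal) ≤ min (E.Qbar t a0) ((E.Qtilde a0 : ℝ):EReal) := by
        refine le_min ?_ ?_
        · rw [hbar]; exact_mod_cast h1
        · exact_mod_cast hQt0
      exact le_trans hge (le_max_right _ _)
  have hB : ((c : ℝ) : EReal) ≤ E.Qtil t b := le_trans hA (hE.2 t ht1 htT hlt a0)
  -- Step 2: analyze Qtil t b
  have hQb_lt : E.Qstar b < c := by
    have := hgap; unfold BanditExec.Δ at this; linarith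
  rcases Nat.eq_zero_or_pos (N E t b) with h | h
  · have hqtil : E.Qtil t b = ((E.Qtilde b : ℝ) : EReal) := by
      have hbar : E.Qbar t b = ⊤ := by simp [BanditExec.Qbar, h]
      have hlow : E.Qlow t b = ⊥ := by simp [BanditExec.Qlow, h]
      rw [BanditExec.Qtil, hbar, hlow, min_eq_right le_top, max_eq_right bot_le]
    rw [hqtil] at hB
    have hc : c ≤ E.Qtilde b := by exact_mod_cast hB
    refine ⟨hc, ?_⟩
    rw [h]
    push_cast
    have hd : 0 < E.Δ b - ε := by linarith
    positivity
  · have habs := abs_le.mp (h0t b h)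
    have hlow : E.Qlow t b = ((E.muhat t b - E.conf t b : ℝ):EReal) := by
      simp [BanditExec.Qlow, h.ne']
    have hbar : E.Qbar t b = ((E.muhat t b + E.conf t b : ℝ):EReal) := by
      simp [BanditExec.Qbar, h.ne']
    have hlow_lt : E.Qlow t b < ((c:ℝ):EReal) := by
      rw [hlow]
      exact_mod_cast lt_of_le_of_lt (by linarith [habs.2] : E.muhat t b - E.conf t b ≤ E.Qstar b) hQb_lt
    have hmin : ((c:ℝ):EReal) ≤ min (E.Qbar t b) ((E.Qtilde b : ℝ):EReal) := by
      rcases le_max_iff.mp hB with h' | h'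
      · exact absurd h' (not_le.mpr hlow_lt)
      · exact h'
    have hc1 : c ≤ E.muhat t b + E.conf t b := by
      have := le_trans hmin (min_le_left _ _)
      rw [hbar] at this; exact_mod_cast this
    have hc2 : c ≤ E.Qtilde b := by
      have := le_trans hmin (min_le_right _ _)
      exact_mod_cast this
    refine ⟨hc2, ?_⟩
    -- numeric part
    set d : ℝ := E.Δ b - ε with hddef
    have hd : 0 < d := by linarith
    have hd2 : d ≤ 2 * E.conf t b := by
      have : E.muhat t b ≤ E.Qstar b + E.conf t b := by linarith [habs.1]
      unfold BanditExec.Δ at hddef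
      linarith
    have hNpos : (0:ℝ) < (N E t b : ℝ) := by exact_mod_cast h
    have hx : (0:ℝ) ≤ 2 * Real.log (1 / E.δ) / (N E t b : ℝ) := by positivity
    have hsq : E.conf t b ^ 2 = 2 * Real.log (1 / E.δ) / (N E t b : ℝ) := by
      rw [BanditExec.conf, Real.sq_sqrt hx]
    have h4 : d ^ 2 ≤ 4 * E.conf t b ^ 2 := by
      nlinarith [mul_self_le_mul_self hd.le hd2]
    rw [hsq] at h4
    have hdsq : d ^ 2 ≤ 8 * Real.log (1 / E.δ) / (N E t b : ℝ) := by
      calc d ^ 2 ≤ 4 * (2 * Real.log (1 / E.δ) / (N E t b : ℝ)) := h4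
        _ = 8 * Real.log (1 / E.δ) / (N E t b : ℝ) := by ring
    rw [le_div_iff₀ hNpos] at hdsq
    rw [le_div_iff₀ (pow_pos hd 2)]
    linarith
end
end
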